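/- arXiv:2005.04826 — 3 statements merged into one kernel-verified Lean document; each statement's English description precedes it below -/
import Mathlib

section
/- Let w ≥ 1, x₀, x₁ ∈ (ℤ/2ℤ)^w, h₀, h₁ ∈ ℤ/2ℤ. Define the state vector over (m,d) ∈ ℤ/2ℤ × (ℤ/2ℤ)^w with amplitudes (1/√(2^{w+2}))·((−1)^{d·x₀+h₀} + (−1)^{m+d·x₁+h₁}). Then this vector is a unit vector, and measuring it in the computational basis yields an outcome (m,d) satisfying m = d·(x₀ + x₁) + h₀ + h₁ with probability 1; that is, the squared amplitudes of all (m,d) violating this equation sum to 0 and the remaining squared amplitudes sum to 1. -/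
/-!
Write `u = d·x₀ + h₀` and `v = m + d·x₁ + h₁`. The amplitude of `(m, d)` is proportional to
`(−1)^u + (−1)^v`, which vanishes when `u ≠ v` and is `±2` when `u = v`; and `u = v` is exactly the
parity equation `m = d·(x₀ + x₁) + h₀ + h₁`. For each `d` that equation has a single solution `m`,
so the `2^w` surviving outcomes each carry squared amplitude `4 / 2^(w+2) = 1 / 2^w`.
-/

/-- `(-1)^b` for a bit `b ∈ ℤ/2ℤ`. -/
def negOnePow₂ (b : ZMod 2) : ℝ := if b = 0 then 1 else -1

lemma negOnePow₂_add_sq (a b : ZMod 2) :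
    (negOnePow₂ a + negOnePow₂ b) ^ 2 = if a = b then 4 else 0 := by
  have h : ∀ c : ZMod 2, c = 0 ∨ c = 1 := by decide
  rcases h a with rfl | rfl <;> rcases h b with rfl | rfl <;> norm_num [negOnePow₂]

section ParityState

variable {ι : Type*} [Fintype ι] (x₀ x₁ : ι → ZMod 2) (h₀ h₁ : ZMod 2) (c : ℝ)

def parityAmplitude (p : ZMod 2 × (ι → ZMod 2)) : ℝ :=
  c * (negOnePow₂ (p.2 ⬝ᵥ x₀ + h₀) + negOnePow₂ (p.1 + p.2 ⬝ᵥ x₁ + h₁))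

lemma parityAmplitude_sq (p : ZMod 2 × (ι → ZMod 2)) :
    parityAmplitude x₀ x₁ h₀ h₁ c p ^ 2 =
      if p.1 = p.2 ⬝ᵥ (x₀ + x₁) + h₀ + h₁ then 4 * c ^ 2 else 0 := by
  have hparity : p.2 ⬝ᵥ x₀ + h₀ = p.1 + p.2 ⬝ᵥ x₁ + h₁ ↔
      p.1 = p.2 ⬝ᵥ (x₀ + x₁) + h₀ + h₁ := by
    rw [← CharTwo.add_eq_zero, ← CharTwo.add_eq_zero (a := p.1), dotProduct_add]
    ring_nf
  simp only [parityAmplitude, mul_pow, negOnePow₂_add_sq, hparity]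
  split_ifs <;> ring

variable [DecidableEq ι]

lemma sum_parityAmplitude_sq_of_not_parity :
    ∑ p ∈ Finset.univ.filter (fun p : ZMod 2 × (ι → ZMod 2) =>
        p.1 ≠ p.2 ⬝ᵥ (x₀ + x₁) + h₀ + h₁),
      parityAmplitude x₀ x₁ h₀ h₁ c p ^ 2 = 0 :=
  Finset.sum_eq_zero fun p hp => by
    rw [parityAmplitude_sq, if_neg (Finset.mem_filter.mp hp).2]

lemma sum_parityAmplitude_sq :
    ∑ p : ZMod 2 × (ι → ZMod 2), parityAmplitude x₀ x₁ h₀ h₁ c p ^ 2 =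
      2 ^ Fintype.card ι * (4 * c ^ 2) := by
  simp only [parityAmplitude_sq, Fintype.sum_prod_type_right, Finset.sum_ite_eq',
    Finset.mem_univ, if_true, Finset.sum_const, Finset.card_univ, Fintype.card_fun,
    ZMod.card, nsmul_eq_mul, Nat.cast_pow, Nat.cast_ofNat]

lemma sum_parityAmplitude_sq_of_parity :
    ∑ p ∈ Finset.univ.filter (fun p : ZMod 2 × (ι → ZMod 2) =>
        p.1 = p.2 ⬝ᵥ (x₀ + x₁) + h₀ + h₁),
      parityAmplitude x₀ x₁ h₀ h₁ c p ^ 2 = 2 ^ Fintype.card ι * (4 * c ^ 2) := by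
  rw [← sum_parityAmplitude_sq]
  refine Finset.sum_filter_of_ne fun p _ hp => ?_
  rw [parityAmplitude_sq] at hp
  by_contra h
  exact hp (if_neg h)

end ParityState

theorem measurement_satisfies_parity_general (w : ℕ)
    (x₀ x₁ : Fin w → ZMod 2) (h₀ h₁ : ZMod 2) :
    (∑ p : ZMod 2 × (Fin w → ZMod 2),
        ((1 / Real.sqrt (2 ^ (w + 2))) *
          (negOnePow₂ ((∑ i, p.2 i * x₀ i) + h₀)
            + negOnePow₂ (p.1 + (∑ i, p.2 i * x₁ i) + h₁))) ^ 2 = 1)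
    ∧ (∑ p ∈ Finset.univ.filter
          (fun p : ZMod 2 × (Fin w → ZMod 2) =>
            p.1 ≠ (∑ i, p.2 i * (x₀ i + x₁ i)) + h₀ + h₁),
        ((1 / Real.sqrt (2 ^ (w + 2))) *
          (negOnePow₂ ((∑ i, p.2 i * x₀ i) + h₀)
            + negOnePow₂ (p.1 + (∑ i, p.2 i * x₁ i) + h₁))) ^ 2 = 0)
    ∧ (∑ p ∈ Finset.univ.filter
          (fun p : ZMod 2 × (Fin w → ZMod 2) =>
            p.1 = (∑ i, p.2 i * (x₀ i + x₁ i)) + h₀ + h₁),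
        ((1 / Real.sqrt (2 ^ (w + 2))) *
          (negOnePow₂ ((∑ i, p.2 i * x₀ i) + h₀)
            + negOnePow₂ (p.1 + (∑ i, p.2 i * x₁ i) + h₁))) ^ 2 = 1) := by
  have hnorm : 2 ^ Fintype.card (Fin w) * (4 * (1 / Real.sqrt (2 ^ (w + 2))) ^ 2) = 1 := by
    rw [Fintype.card_fin, div_pow, one_pow, Real.sq_sqrt (by positivity), pow_add]
    field_simp
    norm_num
  refine ⟨?_, sum_parityAmplitude_sq_of_not_parity x₀ x₁ h₀ h₁ _, ?_⟩
  · exact (sum_parityAmplitude_sq x₀ x₁ h₀ h₁ _).trans hnorm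
  · exact (sum_parityAmplitude_sq_of_parity x₀ x₁ h₀ h₁ _).trans hnorm

/-- The state with amplitudes
`(1/√(2^{w+2})) ((−1)^{d·x₀+h₀} + (−1)^{m+d·x₁+h₁})` over `(m,d)` is a unit
vector, the squared amplitudes on outcomes violating
`m = d·(x₀+x₁) + h₀ + h₁` sum to `0`, and those satisfying it sum to `1`. -/
theorem measurement_satisfies_parity (w : ℕ) (hw : 1 ≤ w)
    (x₀ x₁ : Fin w → ZMod 2) (h₀ h₁ : ZMod 2) :
    (∑ p : ZMod 2 × (Fin w → ZMod 2),
        ((1 / Real.sqrt (2 ^ (w + 2))) *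
          (negOnePow₂ ((∑ i, p.2 i * x₀ i) + h₀)
            + negOnePow₂ (p.1 + (∑ i, p.2 i * x₁ i) + h₁))) ^ 2 = 1)
    ∧ (∑ p ∈ Finset.univ.filter
          (fun p : ZMod 2 × (Fin w → ZMod 2) =>
            p.1 ≠ (∑ i, p.2 i * (x₀ i + x₁ i)) + h₀ + h₁),
        ((1 / Real.sqrt (2 ^ (w + 2))) *
          (negOnePow₂ ((∑ i, p.2 i * x₀ i) + h₀)
            + negOnePow₂ (p.1 + (∑ i, p.2 i * x₁ i) + h₁))) ^ 2 = 0)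
    ∧ (∑ p ∈ Finset.univ.filter
          (fun p : ZMod 2 × (Fin w → ZMod 2) =>
            p.1 = (∑ i, p.2 i * (x₀ i + x₁ i)) + h₀ + h₁),
        ((1 / Real.sqrt (2 ^ (w + 2))) *
          (negOnePow₂ ((∑ i, p.2 i * x₀ i) + h₀)
            + negOnePow₂ (p.1 + (∑ i, p.2 i * x₁ i) + h₁))) ^ 2 = 1) :=
  measurement_satisfies_parity_general w x₀ x₁ h₀ h₁
end

section
/- Let D be the truncated discrete Gaussian on ℤ_q^n with parameter B: D(x) = exp(−π‖x‖²/B²)/Z for ‖x‖ ≤ B√n and 0 otherwise, where Z normalizes. Then for any shift vector e ∈ ℤ^n with ‖e‖ ≤ δ·B·√n (δ ∈ (0,1)), the squared Hellinger distance between D and its shift D(· − e) satisfies 1 − H²(D, D(·−e)) ≥ exp(−2π·δ·n) · (fraction of mass in the intersection of supports); in particular the Hellinger distance tends to 0 as δ·n → 0. -/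
/-- Euclidean norm of an integer vector. -/
noncomputable def intNorm {n : ℕ} (x : Fin n → ℤ) : ℝ :=
  Real.sqrt (∑ i, ((x i : ℝ)) ^ 2)

/-- Unnormalized truncated Gaussian weight with parameter `B`. -/
noncomputable def gaussWeight {n : ℕ} (B : ℝ) (x : Fin n → ℤ) : ℝ :=
  if intNorm x ≤ B * Real.sqrt n then Real.exp (-Real.pi * intNorm x ^ 2 / B ^ 2) else 0

/-!
On the intersection of the two supports, the shift changes the exponent by
`π (‖x - e‖² - ‖x‖²) / B² ≤ π (2‖x‖‖e‖ + ‖e‖²) / B² ≤ 3πδn`, so the shifted weight is at least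
`exp (-4πδn)` times the unshifted one. Taking square roots, `√(D x · D (x - e)) ≥ exp (-2πδn) · D x`
there, and summing over `x` gives the bound; outside the intersection the left-hand side vanishes.
-/

open Real

lemma intNorm_nonneg {n : ℕ} (x : Fin n → ℤ) : 0 ≤ intNorm x := Real.sqrt_nonneg _

lemma intNorm_eq_norm {n : ℕ} (x : Fin n → ℤ) :
    intNorm x = ‖WithLp.toLp 2 (((↑) : ℤ → ℝ) ∘ x)‖ := by
  simp [EuclideanSpace.norm_eq, intNorm, Real.norm_eq_abs, sq_abs]

lemma intNorm_sub_le {n : ℕ} (x e : Fin n → ℤ) : intNorm (x - e) ≤ intNorm x + intNorm e := by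
  have hcast : WithLp.toLp 2 (((↑) : ℤ → ℝ) ∘ (x - e))
      = WithLp.toLp 2 (((↑) : ℤ → ℝ) ∘ x) - WithLp.toLp 2 (((↑) : ℤ → ℝ) ∘ e) := by
    ext i; simp
  simpa only [intNorm_eq_norm, hcast] using norm_sub_le _ _

lemma add_sq_le_sq_add {s t R δ : ℝ} (hs₀ : 0 ≤ s) (ht₀ : 0 ≤ t) (hs : s ≤ R) (ht : t ≤ δ * R)
    (hδ₀ : 0 ≤ δ) (hδ₁ : δ ≤ 1) :
    (s + t) ^ 2 ≤ s ^ 2 + 3 * δ * R ^ 2 := by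
  have hst : s * t ≤ δ * R ^ 2 := by nlinarith [mul_le_mul hs ht ht₀ (hs₀.trans hs)]
  have htt : t ^ 2 ≤ δ * R ^ 2 := by
    nlinarith [pow_le_pow_left₀ ht₀ ht 2, mul_nonneg (mul_nonneg hδ₀ (sub_nonneg.2 hδ₁)) (sq_nonneg R)]
  linarith

lemma gaussWeight_nonneg {n : ℕ} (B : ℝ) (x : Fin n → ℤ) : 0 ≤ gaussWeight B x := by
  unfold gaussWeight; split_ifs <;> positivity

lemma mul_le_sqrt_mul_of_sq_mul_le {c a b : ℝ} (ha : 0 ≤ a) (h : c ^ 2 * a ≤ b) :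
    c * a ≤ √(a * b) :=
  Real.le_sqrt_of_sq_le (by nlinarith)

lemma exp_mul_gaussWeight_le_gaussWeight_sub {n : ℕ} {B δ : ℝ} (hB : 0 < B) (hδ₀ : 0 ≤ δ)
    (hδ₁ : δ ≤ 1) {x e : Fin n → ℤ} (he : intNorm e ≤ δ * B * √n) (hx : intNorm x ≤ B * √n)
    (hxe : intNorm (x - e) ≤ B * √n) :
    exp (-4 * π * δ * n) * gaussWeight B x ≤ gaussWeight B (x - e) := by
  have hsq : intNorm (x - e) ^ 2 ≤ intNorm x ^ 2 + 3 * δ * (B ^ 2 * n) := by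
    have := add_sq_le_sq_add (intNorm_nonneg x) (intNorm_nonneg e) hx
      (by rwa [← mul_assoc]) hδ₀ hδ₁
    rw [mul_pow, sq_sqrt n.cast_nonneg] at this
    exact (pow_le_pow_left₀ (intNorm_nonneg _) (intNorm_sub_le x e) 2).trans this
  have hexponent : π * intNorm (x - e) ^ 2 / B ^ 2 ≤ π * intNorm x ^ 2 / B ^ 2 + 3 * π * δ * n := by
    rw [div_add' _ _ _ (pow_pos hB 2).ne', div_le_div_iff_of_pos_right (pow_pos hB 2)]
    nlinarith [pi_pos]
  have hπδn : 0 ≤ π * δ * n := by positivity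
  rw [gaussWeight, gaussWeight, if_pos hx, if_pos hxe, ← exp_add, exp_le_exp]
  simp only [neg_mul, neg_div]
  linarith

theorem truncated_gaussian_shift_hellinger_general (n : ℕ)
    (B δ : ℝ) (hB : 0 < B) (hδ0 : 0 < δ) (hδ1 : δ < 1)
    (Λ : Finset (Fin n → ℤ))
    (e : Fin n → ℤ) (he : intNorm e ≤ δ * B * Real.sqrt n)
    (Z : ℝ) (hZ : Z = ∑ x ∈ Λ, gaussWeight B x) :
    Real.exp (-2 * Real.pi * δ * n) *
        ∑ x ∈ Λ, (if intNorm x ≤ B * Real.sqrt n ∧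
            intNorm (x - e) ≤ B * Real.sqrt n then gaussWeight B x / Z else 0)
      ≤ ∑ x ∈ Λ, Real.sqrt ((gaussWeight B x / Z) * (gaussWeight B (x - e) / Z)) := by
  have hZ₀ : 0 ≤ Z := hZ ▸ Finset.sum_nonneg fun x _ => gaussWeight_nonneg B x
  rw [Finset.mul_sum]
  refine Finset.sum_le_sum fun x _ => ?_
  split_ifs with hsupp
  · refine mul_le_sqrt_mul_of_sq_mul_le (div_nonneg (gaussWeight_nonneg B x) hZ₀) ?_
    have hexp_sq : exp (-2 * π * δ * n) ^ 2 = exp (-4 * π * δ * n) := by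
      rw [← exp_nat_mul]; push_cast; ring_nf
    rw [hexp_sq, ← mul_div_assoc]
    gcongr
    exact exp_mul_gaussWeight_le_gaussWeight_sub hB hδ0.le hδ1.le he hsupp.1 hsupp.2
  · rw [mul_zero]
    exact Real.sqrt_nonneg _

/-- For the truncated discrete Gaussian `D` with parameter `B`
(densities taken over a finite box `Λ` containing the support) and a shift
`e` with `‖e‖ ≤ δ·B·√n`, `δ ∈ (0,1)`, the Hellinger affinity satisfies
`1 − H²(D, D(·−e)) = ∑ √(D x · D(x−e)) ≥ exp(−2πδn) ·` (mass of `D` on the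
intersection of the two supports). -/
theorem truncated_gaussian_shift_hellinger (n : ℕ) (hn : 1 ≤ n)
    (B δ : ℝ) (hB : 0 < B) (hδ0 : 0 < δ) (hδ1 : δ < 1)
    (Λ : Finset (Fin n → ℤ))
    (hΛ : ∀ x : Fin n → ℤ, intNorm x ≤ 2 * B * Real.sqrt n → x ∈ Λ)
    (e : Fin n → ℤ) (he : intNorm e ≤ δ * B * Real.sqrt n)
    (Z : ℝ) (hZ : Z = ∑ x ∈ Λ, gaussWeight B x) :
    Real.exp (-2 * Real.pi * δ * n) *
        ∑ x ∈ Λ, (if intNorm x ≤ B * Real.sqrt n ∧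
            intNorm (x - e) ≤ B * Real.sqrt n then gaussWeight B x / Z else 0)
      ≤ ∑ x ∈ Λ, Real.sqrt ((gaussWeight B x / Z) * (gaussWeight B (x - e) / Z)) :=
  truncated_gaussian_shift_hellinger_general n B δ hB hδ0 hδ1 Λ e he Z hZ
end

section
/- Consider a game where a challenger picks a key k with trapdoor, a prover outputs λ tuples (yᵢ, mᵢ, dᵢ) with distinct yᵢ, and for each i the check passes with the parity condition involving two independent uniform hash bits unless both preimages were queried. If the prover never produces a claw (i.e., never queries both preimages of any yᵢ), then the number of passing checks is stochastically dominated by a Binomial(λ, 1/2) random variable, and hence the probability that more than 0.75λ checks pass is at most exp(−λ/8). -/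
/-!
Chernoff bound at `t = log 3`: on `{0, 1}` one has `exp (t x) = 1 + 2 x`, so
`exp (t ∑ Xᵢ) = ∏ (1 + 2 Xᵢ)`. The partial product over `i < k` is measurable with respect to
the outcomes before `k`, so conditioning on them gives
`𝔼 ∏_{i ≤ k} (1 + 2 Xᵢ) ≤ (1 + 2 · ½) 𝔼 ∏_{i < k} (1 + 2 Xᵢ)`, and the moment generating function
is at most `2 ^ n`. Finally `3 ^ (-3n/4) 2 ^ n ≤ exp (-n/8)` because `2 ^ 8 e ≤ 3 ^ 6`.
-/

open MeasureTheory ProbabilityTheory Finset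

section PullOut

variable {Ω : Type*} {m m0 : MeasurableSpace Ω} {μ : Measure Ω} [IsFiniteMeasure μ]

lemma integral_mul_le_of_condExp_le (hm : m ≤ m0) {g X : Ω → ℝ} {C c : ℝ}
    (hg : StronglyMeasurable[m] g) (hg0 : 0 ≤ g) (hgC : ∀ ω, ‖g ω‖ ≤ C)
    (hX : Integrable X μ) (hc : μ[X | m] ≤ᵐ[μ] fun _ => c) :
    ∫ ω, g ω * X ω ∂μ ≤ c * ∫ ω, g ω ∂μ := by
  have hg_int : Integrable g μ :=
    (integrable_const C).mono' (hg.mono hm).aestronglyMeasurable (ae_of_all _ hgC)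
  calc ∫ ω, g ω * X ω ∂μ = ∫ ω, μ[g * X | m] ω ∂μ := (integral_condExp hm).symm
    _ = ∫ ω, g ω * μ[X | m] ω ∂μ :=
        integral_congr_ae (condExp_stronglyMeasurable_mul_of_bound hm hg hX C (ae_of_all _ hgC))
    _ ≤ ∫ ω, g ω * c ∂μ := by
        refine integral_mono_ae (integrable_condExp.bdd_mul (hg.mono hm).aestronglyMeasurable
          (ae_of_all _ hgC)) (hg_int.mul_const c) ?_
        filter_upwards [hc] with ω hω using mul_le_mul_of_nonneg_left hω (hg0 ω)
    _ = c * ∫ ω, g ω ∂μ := by rw [integral_mul_const, mul_comm]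

end PullOut

section PastSigmaAlgebra

variable {Ω β : Type*} {m0 : MeasurableSpace Ω} [MeasurableSpace β] {n : ℕ}

abbrev pastSigmaAlgebra (X : Fin n → Ω → β) (i : Fin n) : MeasurableSpace Ω :=
  ⨆ j : {j : Fin n // (j : ℕ) < (i : ℕ)}, MeasurableSpace.comap (X j) inferInstance

variable {X : Fin n → Ω → β}

lemma pastSigmaAlgebra_le (hX : ∀ i, Measurable (X i)) (i : Fin n) :
    pastSigmaAlgebra X i ≤ m0 :=
  iSup_le fun j => (hX j).comap_le

lemma measurable_pastSigmaAlgebra {i j : Fin n} (hji : (j : ℕ) < i) :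
    Measurable[pastSigmaAlgebra X i] (X j) :=
  Measurable.of_comap_le <| le_iSup (fun j : {j : Fin n // (j : ℕ) < i} =>
    MeasurableSpace.comap (X j) inferInstance) ⟨j, hji⟩

end PastSigmaAlgebra

lemma Finset.filter_val_lt_succ {n k : ℕ} (hk : k < n) :
    univ.filter (fun j : Fin n => (j : ℕ) < k + 1) =
      insert ⟨k, hk⟩ (univ.filter (fun j : Fin n => (j : ℕ) < k)) := by
  ext j; simp [Fin.ext_iff]; omega

lemma Finset.norm_prod_one_add_mul_le {ι : Type*} (s : Finset ι) {a : ℝ} (ha : 0 ≤ a)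
    {x : ι → ℝ} (hx0 : ∀ i, 0 ≤ x i) (hx1 : ∀ i, x i ≤ 1) :
    ‖∏ i ∈ s, (1 + a * x i)‖ ≤ (1 + a) ^ s.card := by
  have h0 : ∀ i ∈ s, 0 ≤ 1 + a * x i := fun i _ => by nlinarith [hx0 i]
  rw [Real.norm_of_nonneg (prod_nonneg h0), ← prod_const]
  exact prod_le_prod h0 fun i _ => by nlinarith [hx1 i]

section Products

variable {Ω ι : Type*} {m0 : MeasurableSpace Ω} {μ : Measure Ω} {a : ℝ}

lemma integrable_prod_one_add_mul [IsFiniteMeasure μ] (s : Finset ι) (ha : 0 ≤ a)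
    {X : ι → Ω → ℝ} (hX : ∀ i, Measurable (X i)) (hX0 : ∀ i ω, 0 ≤ X i ω)
    (hX1 : ∀ i ω, X i ω ≤ 1) :
    Integrable (fun ω => ∏ i ∈ s, (1 + a * X i ω)) μ :=
  (integrable_const _).mono'
    (Finset.measurable_prod _ fun i _ => ((hX i).const_mul a).const_add 1).aestronglyMeasurable
    (ae_of_all _ fun ω => norm_prod_one_add_mul_le s ha (hX0 · ω) (hX1 · ω))

variable [IsProbabilityMeasure μ] {n : ℕ} {X : Fin n → Ω → ℝ} {p : ℝ}

lemma integral_prod_filter_lt_le (ha : 0 ≤ a) (hp : 0 ≤ p) (hX : ∀ i, Measurable (X i))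
    (hX0 : ∀ i ω, 0 ≤ X i ω) (hX1 : ∀ i ω, X i ω ≤ 1)
    (hcond : ∀ i, μ[X i | pastSigmaAlgebra X i] ≤ᵐ[μ] fun _ => p) {k : ℕ} (hk : k ≤ n) :
    ∫ ω, ∏ i ∈ univ.filter (fun i : Fin n => (i : ℕ) < k), (1 + a * X i ω) ∂μ ≤
      (1 + a * p) ^ k := by
  induction k with
  | zero => simp
  | succ k ih =>
    set i : Fin n := ⟨k, hk⟩
    set P := fun ω => ∏ i ∈ univ.filter (fun i : Fin n => (i : ℕ) < k), (1 + a * X i ω)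
    have hP0 : 0 ≤ P := fun ω => prod_nonneg fun j _ => by nlinarith [hX0 j ω]
    have hP_meas : StronglyMeasurable[pastSigmaAlgebra X i] P :=
      (Finset.measurable_prod _ fun j hj =>
        ((measurable_pastSigmaAlgebra (mem_filter.mp hj).2).const_mul a).const_add 1)
        |>.stronglyMeasurable
    have hPC : ∀ ω, ‖P ω‖ ≤ (1 + a) ^ _ := fun ω =>
      norm_prod_one_add_mul_le _ ha (hX0 · ω) (hX1 · ω)
    have hP_int : Integrable P μ := integrable_prod_one_add_mul _ ha hX hX0 hX1
    have hX_int : Integrable (X i) μ :=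
      (integrable_const 1).mono' (hX i).aestronglyMeasurable
        (ae_of_all _ fun ω => by rw [Real.norm_of_nonneg (hX0 i ω)]; exact hX1 i ω)
    have hstep : ∫ ω, P ω * X i ω ∂μ ≤ p * ∫ ω, P ω ∂μ :=
      integral_mul_le_of_condExp_le (pastSigmaAlgebra_le hX i) hP_meas hP0 hPC hX_int (hcond i)
    calc ∫ ω, ∏ j ∈ univ.filter (fun j : Fin n => (j : ℕ) < k + 1), (1 + a * X j ω) ∂μ
        = ∫ ω, P ω + a * (P ω * X i ω) ∂μ := by
          have hi : i ∉ univ.filter (fun j : Fin n => (j : ℕ) < k) := by simp [i]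
          congr 1; funext ω
          rw [filter_val_lt_succ hk, prod_insert hi]
          ring
      _ = ∫ ω, P ω ∂μ + a * ∫ ω, P ω * X i ω ∂μ := by
          rw [integral_add hP_int, integral_const_mul]
          exact (hX_int.bdd_mul hP_int.aestronglyMeasurable (ae_of_all _ hPC)).const_mul a
      _ ≤ (1 + a * p) * ∫ ω, P ω ∂μ := by nlinarith
      _ ≤ (1 + a * p) ^ (k + 1) := by
          rw [pow_succ']
          exact mul_le_mul_of_nonneg_left (ih (Nat.le_of_succ_le hk)) (by positivity)

lemma integral_prod_one_add_mul_le (ha : 0 ≤ a) (hp : 0 ≤ p) (hX : ∀ i, Measurable (X i))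
    (hX0 : ∀ i ω, 0 ≤ X i ω) (hX1 : ∀ i ω, X i ω ≤ 1)
    (hcond : ∀ i, μ[X i | pastSigmaAlgebra X i] ≤ᵐ[μ] fun _ => p) :
    ∫ ω, ∏ i, (1 + a * X i ω) ∂μ ≤ (1 + a * p) ^ n := by
  simpa using integral_prod_filter_lt_le ha hp hX hX0 hX1 hcond le_rfl

end Products

lemma Real.log_two_add_one_div_eight_le : Real.log 2 + 1 / 8 ≤ 3 / 4 * Real.log 3 := by
  suffices Real.exp (8 * Real.log 2 + 1) ≤ Real.exp (6 * Real.log 3) by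
    linarith [Real.exp_le_exp.mp this]
  rw [Real.exp_add, show (8 : ℝ) * Real.log 2 = Real.log (2 ^ 8) by rw [Real.log_pow]; norm_num,
    show (6 : ℝ) * Real.log 3 = Real.log (3 ^ 6) by rw [Real.log_pow]; norm_num,
    Real.exp_log (by norm_num), Real.exp_log (by norm_num)]
  linarith [Real.exp_one_lt_d9]

lemma exp_neg_log_three_mul_mul_two_pow_le (n : ℕ) :
    Real.exp (-Real.log 3 * (0.75 * n)) * 2 ^ n ≤ Real.exp (-(n : ℝ) / 8) := by
  rw [show (2 : ℝ) ^ n = Real.exp (n * Real.log 2) by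
      rw [Real.exp_nat_mul, Real.exp_log two_pos], ← Real.exp_add, Real.exp_le_exp]
  nlinarith [Real.log_two_add_one_div_eight_le, n.cast_nonneg (α := ℝ)]

theorem soundness_check_count_bound_general (n : ℕ)
    {Ω : Type*} [MeasurableSpace Ω] (μ : Measure Ω) [IsProbabilityMeasure μ]
    (X : Fin n → Ω → ℝ)
    (hmeas : ∀ i, Measurable (X i))
    (h01 : ∀ i ω, X i ω = 0 ∨ X i ω = 1)
    (hcond : ∀ i : Fin n,
      μ[X i | ⨆ j : {j : Fin n // (j : ℕ) < (i : ℕ)},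
          MeasurableSpace.comap (X j) inferInstance]
        ≤ᵐ[μ] fun _ => (1 / 2 : ℝ)) :
    (μ {ω | (0.75 : ℝ) * n < ∑ i, X i ω}).toReal ≤ Real.exp (-(n : ℝ) / 8) := by
  have hX0 : ∀ i ω, 0 ≤ X i ω := fun i ω => by rcases h01 i ω with h | h <;> simp [h]
  have hX1 : ∀ i ω, X i ω ≤ 1 := fun i ω => by rcases h01 i ω with h | h <;> simp [h]
  have hexp : (fun ω => Real.exp (Real.log 3 * ∑ i, X i ω)) =
      fun ω => ∏ i, (1 + 2 * X i ω) := by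
    funext ω
    rw [mul_sum, Real.exp_sum]
    refine prod_congr rfl fun i _ => ?_
    rcases h01 i ω with h | h <;> simp [h, Real.exp_log]
    norm_num
  have hmgf : mgf (fun ω => ∑ i, X i ω) μ (Real.log 3) ≤ 2 ^ n := by
    rw [mgf, hexp]
    simpa [one_add_one_eq_two] using
      integral_prod_one_add_mul_le zero_le_two one_half_pos.le hmeas hX0 hX1 hcond
  have hint_exp := hexp ▸ integrable_prod_one_add_mul (μ := μ) univ zero_le_two hmeas hX0 hX1
  calc (μ {ω | (0.75 : ℝ) * n < ∑ i, X i ω}).toReal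
      ≤ μ.real {ω | (0.75 : ℝ) * n ≤ ∑ i, X i ω} :=
        measureReal_mono (Set.ofPred_subset_ofPred.mpr fun _ => le_of_lt)
    _ ≤ Real.exp (-Real.log 3 * (0.75 * n)) * mgf (fun ω => ∑ i, X i ω) μ (Real.log 3) :=
        measure_ge_le_exp_mul_mgf _ (Real.log_nonneg (by norm_num)) hint_exp
    _ ≤ Real.exp (-Real.log 3 * (0.75 * n)) * 2 ^ n := by gcongr
    _ ≤ Real.exp (-(n : ℝ) / 8) := exp_neg_log_three_mul_mul_two_pow_le n

/-- Abstract probabilistic core of the soundness proof.  If a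
prover never queries both preimages, each check outcome `Xᵢ` is a `{0,1}`-valued
random variable that, conditioned on the previous outcomes, equals `1` with
probability at most `1/2`; hence the number of passing checks is dominated by a
`Binomial(λ, 1/2)` variable and
`Pr[∑ Xᵢ > 0.75·λ] ≤ exp(−λ/8)`. -/
theorem soundness_check_count_bound (n : ℕ) (hn : 1 ≤ n)
    {Ω : Type*} [MeasurableSpace Ω] (μ : Measure Ω) [IsProbabilityMeasure μ]
    (X : Fin n → Ω → ℝ)
    (hmeas : ∀ i, Measurable (X i))
    (h01 : ∀ i ω, X i ω = 0 ∨ X i ω = 1)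
    (hcond : ∀ i : Fin n,
      μ[X i | ⨆ j : {j : Fin n // (j : ℕ) < (i : ℕ)},
          MeasurableSpace.comap (X j) inferInstance]
        ≤ᵐ[μ] fun _ => (1 / 2 : ℝ)) :
    (μ {ω | (0.75 : ℝ) * n < ∑ i, X i ω}).toReal ≤ Real.exp (-(n : ℝ) / 8) :=
  soundness_check_count_bound_general n μ X hmeas h01 hcond
end
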